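/- arXiv:1904.02416 — 6 statements merged into one kernel-verified Lean document; each statement's English description precedes it below -/
import Mathlib

section
/- Let F be a finite field, let G be an l×m matrix over F, let A ⊊ {1,…,m}, and let i ∉ A. Then the following are equivalent: (a) for every vector u ∈ F^m with support contained in A, the vector u + e_i does not lie in the row space of G; (b) the eavesdropper gains no information about x_i from (Gx, x|_A), i.e., for every c ∈ F^l, every assignment a : A → F and all α, β ∈ F, the number of vectors x ∈ F^m satisfying Gx = c, x_j = a(j) for all j ∈ A, and x_i = α equals the number of such vectors with x_i = β in place of x_i = α. -/
/-!
If `y` lies in the kernel of `G`, vanishes on `A` and has `y i = 1`, then `x ↦ x + t • y` fixes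
the eavesdropper's view `(G x, x|_A)` and shifts `x i` by `t`, so all values of `x i` are equally
likely. By duality such a `y` exists when `e i` avoids the span of the rows of `G` and of
the `e j`, `j ∈ A`, which is condition (a). Conversely, if `u + e i` is a combination of rows with
`u` supported on `A`, then `x i = 0` whenever `G x = 0` and `x|_A = 0`, so the value `x i = 1` is
impossible for the view `(0, 0)`, which does occur.
-/

open Matrix Submodule

section

variable {K ι κ : Type*} [Field K]

variable (K) in
def supportedOn (A : Set ι) : Submodule K (ι → K) where
  carrier := {u | ∀ j ∉ A, u j = 0}
  zero_mem' _ _ := rfl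
  add_mem' hu hv j hj := by simp [hu j hj, hv j hj]
  smul_mem' c u hu j hj := by simp [hu j hj]

theorem single_mem_supportedOn [DecidableEq ι] {A : Set ι} {j : ι} (hj : j ∈ A) (c : K) :
    Pi.single j c ∈ supportedOn K A :=
  fun _ hk => Pi.single_eq_of_ne (ne_of_mem_of_not_mem hj hk).symm _

variable [Fintype ι]

theorem exists_dotProduct_eq_one_of_notMem [DecidableEq ι] {W : Submodule K (ι → K)}
    {v : ι → K} (hv : v ∉ W) : ∃ y : ι → K, (∀ w ∈ W, w ⬝ᵥ y = 0) ∧ v ⬝ᵥ y = 1 := by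
  obtain ⟨f, hfv, hfW⟩ := W.exists_dual_map_eq_bot_of_notMem hv inferInstance
  have hf (w : ι → K) : w ⬝ᵥ (dotProductEquiv K ι).symm f = f w := by
    rw [dotProduct_comm]
    exact LinearMap.congr_fun ((dotProductEquiv K ι).apply_symm_apply f) w
  refine ⟨(f v)⁻¹ • (dotProductEquiv K ι).symm f, fun w hw => ?_, ?_⟩
  · rw [dotProduct_smul, hf, LinearMap.mem_ker.1 (LinearMap.le_ker_iff_map.2 hfW hw), smul_zero]
  · rw [dotProduct_smul, hf, smul_eq_mul, inv_mul_cancel₀ hfv]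

theorem dotProduct_eq_zero_of_mem_span_rows {G : Matrix κ ι K} {v x : ι → K}
    (hv : v ∈ span K (Set.range G)) (hx : G *ᵥ x = 0) : v ⬝ᵥ x = 0 := by
  induction hv using span_induction with
  | mem _ hw => obtain ⟨r, rfl⟩ := hw; exact congrFun hx r
  | zero => exact zero_dotProduct x
  | add _ _ _ _ h₁ h₂ => rw [add_dotProduct, h₁, h₂, add_zero]
  | smul c _ _ h => rw [smul_dotProduct, h, smul_zero]

def indexCodeFiber (G : Matrix κ ι K) (A : Set ι) (c : κ → K) (a : A → K) (i : ι) (α : K) :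
    Set (ι → K) :=
  {x | G *ᵥ x = c ∧ (∀ j : A, x j = a j) ∧ x i = α}

theorem card_indexCodeFiber_eq {G : Matrix κ ι K} {A : Set ι} {i : ι} {y : ι → K}
    (hGy : G *ᵥ y = 0) (hyA : ∀ j ∈ A, y j = 0) (hyi : y i = 1)
    (c : κ → K) (a : A → K) (α β : K) :
    Nat.card (indexCodeFiber G A c a i α) = Nat.card (indexCodeFiber G A c a i β) := by
  have hshift (t : K) : t + (β - α) = β ↔ t = α := by rw [← eq_sub_iff_add_eq, sub_sub_cancel]
  exact Nat.card_congr <| Equiv.subtypeEquiv (Equiv.addRight ((β - α) • y)) fun x => by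
    simp +contextual [indexCodeFiber, mulVec_add, mulVec_smul, hGy, hyi, hyA, hshift]

variable [DecidableEq ι]

theorem exists_kernel_vector_of_forall_notMem_span (G : Matrix κ ι K) (A : Set ι) (i : ι)
    (h : ∀ u : ι → K, (∀ j, u j ≠ 0 → j ∈ A) →
      u + Pi.single i 1 ∉ span K (Set.range G)) :
    ∃ y : ι → K, G *ᵥ y = 0 ∧ (∀ j ∈ A, y j = 0) ∧ y i = 1 := by
  have hi : Pi.single i 1 ∉ span K (Set.range G) ⊔ supportedOn K A := by
    intro hmem
    obtain ⟨w, hw, t, ht, hwt⟩ := mem_sup.1 hmem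
    refine h (-t) (fun j hj => by_contra fun hjA => hj (by simp [ht j hjA])) ?_
    rwa [← hwt, add_comm w, neg_add_cancel_left]
  obtain ⟨y, hyW, hyi⟩ := exists_dotProduct_eq_one_of_notMem hi
  refine ⟨y, funext fun r => hyW _ (mem_sup_left (subset_span ⟨r, rfl⟩)), fun j hj => ?_, ?_⟩
  · simpa using hyW _ (mem_sup_right (single_mem_supportedOn hj 1))
  · simpa using hyi

theorem apply_eq_zero_of_add_single_mem_span {G : Matrix κ ι K} {A : Set ι} {i : ι}
    {u : ι → K} (hu : ∀ j, u j ≠ 0 → j ∈ A)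
    (hmem : u + Pi.single i 1 ∈ span K (Set.range G))
    {x : ι → K} (hx : G *ᵥ x = 0) (hxA : ∀ j ∈ A, x j = 0) : x i = 0 := by
  have hux : u ⬝ᵥ x = 0 := Finset.sum_eq_zero fun j _ => by
    by_cases hj : u j = 0
    · simp [hj]
    · simp [hxA j (hu j hj)]
  simpa [add_dotProduct, hux] using dotProduct_eq_zero_of_mem_span_rows hmem hx

end

theorem weak_security_iff_uniform_count_general
    {F : Type*} [Field F] [Fintype F] {l m : ℕ}
    (G : Matrix (Fin l) (Fin m) F) (A : Set (Fin m))
    (i : Fin m) :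
    (∀ u : Fin m → F, (∀ j, u j ≠ 0 → j ∈ A) →
        u + Pi.single i (1 : F) ∉ Submodule.span F (Set.range fun r j => G r j)) ↔
    (∀ (c : Fin l → F) (a : ↥A → F) (α β : F),
        Nat.card {x : Fin m → F //
            G.mulVec x = c ∧ (∀ j : ↥A, x j.1 = a j) ∧ x i = α} =
        Nat.card {x : Fin m → F //
            G.mulVec x = c ∧ (∀ j : ↥A, x j.1 = a j) ∧ x i = β}) := by
  refine ⟨fun ha c a α β => ?_, fun hb u hu hmem => ?_⟩
  · obtain ⟨y, hGy, hyA, hyi⟩ := exists_kernel_vector_of_forall_notMem_span G A i ha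
    exact card_indexCodeFiber_eq hGy hyA hyi c a α β
  · have hone : IsEmpty (indexCodeFiber G A 0 0 i 1) := ⟨fun ⟨x, hGx, hxA, hxi⟩ =>
      one_ne_zero <| hxi ▸ apply_eq_zero_of_add_single_mem_span hu hmem hGx fun j hj => hxA ⟨j, hj⟩⟩
    have hzero : Nonempty (indexCodeFiber G A 0 0 i 0) := ⟨⟨0, by simp [indexCodeFiber]⟩⟩
    have h01 : Nat.card (indexCodeFiber G A 0 0 i 0) = Nat.card (indexCodeFiber G A 0 0 i 1) :=
      hb 0 0 0 1
    exact Nat.card_pos.ne' (h01.trans Nat.card_of_isEmpty)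

/-- Lemma 4.3 of Dau–Skachek–Chee, weak security for message `i`.
For a linear index code `x ↦ G.mulVec x` over a finite field `F`, with eavesdropper
side-information set `A ⊊ [m]` and `i ∉ A`, the span condition (a) is equivalent to the
uniform-conditional-distribution (counting) condition (b). -/
theorem weak_security_iff_uniform_count
    {F : Type*} [Field F] [Fintype F] {l m : ℕ}
    (G : Matrix (Fin l) (Fin m) F) (A : Set (Fin m)) (hA : A ⊂ Set.univ)
    (i : Fin m) (hi : i ∉ A) :
    (∀ u : Fin m → F, (∀ j, u j ≠ 0 → j ∈ A) →
        u + Pi.single i (1 : F) ∉ Submodule.span F (Set.range fun r j => G r j)) ↔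
    (∀ (c : Fin l → F) (a : ↥A → F) (α β : F),
        Nat.card {x : Fin m → F //
            G.mulVec x = c ∧ (∀ j : ↥A, x j.1 = a j) ∧ x i = α} =
        Nat.card {x : Fin m → F //
            G.mulVec x = c ∧ (∀ j : ↥A, x j.1 = a j) ∧ x i = β}) :=
  weak_security_iff_uniform_count_general G A i
end

section
/- Let F be a finite field and let the index set [m] = {1,…,m} be partitioned into S_1 = {1,…,m_1} and S_2 = {m_1+1,…,m}. Let K_i ⊆ [m]\{i} be arbitrary side-information sets (possibly containing indices from both parts), and let A = A_1 ∪ A_2 with A_1 ⊆ S_1 and A_2 ⊆ S_2. For j ∈ {1,2} let G_j ∈ F^{l_j×m_j} be a valid index code for the sub-instance on S_j with side-information sets K_i ∩ S_j (i ∈ S_j) that is weakly secure against A_j. Then the block-diagonal matrix G = diag(G_1, G_2) ∈ F^{(l_1+l_2)×m} is a valid index code for the full instance (with side-information sets K_i) and is weakly secure against A. In particular the optimal length of a valid weakly secure linear index code for the full instance is at most l*_1 + l*_2, the sum of the optimal lengths for the two sub-instances. -/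
open Matrix Sum

noncomputable section

variable (F : Type*) [Field F] [Fintype F]

/-- The row space of a matrix: the span of its rows. -/
def rowSpace {ρ ι : Type*} (G : Matrix ρ ι F) : Submodule F (ι → F) :=
  Submodule.span F (Set.range fun r j => G r j)

/-- Weak security of the linear code `x ↦ G x` against an eavesdropper knowing `x j` for
`j ∈ A`: for every `i ∉ A` and every `u` supported in `A`, `u + e i` is not in the
row space of `G`. -/
def WeaklySecure {ρ ι : Type*} [DecidableEq ι] (G : Matrix ρ ι F) (A : Set ι) : Prop :=
  ∀ i ∉ A, ∀ u : ι → F, (∀ j, u j ≠ 0 → j ∈ A) →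
    u + Pi.single i (1 : F) ∉ rowSpace F G

/-- `G` is a valid index code for side-information sets `K`: every receiver `i` can
decode `x i` from the codeword `G.mulVec x` and its side information `x|_{K i}`. -/
def ValidCode {ρ ι : Type*} [Fintype ι] (K : ι → Set ι) (G : Matrix ρ ι F) : Prop :=
  ∀ i : ι, ∃ D : (ρ → F) → (↥(K i) → F) → F,
    ∀ x : ι → F, D (G.mulVec x) (fun j => x j.1) = x i

/-!
The block-diagonal code treats the two parts independently. Receiver `inl i` reads the `G₁`-rows
of the codeword, which depend only on `x ∘ inl`, and decodes with the `G₁`-decoder, using only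
the side information it has inside the first part (symmetrically for `inr i`). For security, a
vector in the row space of `fromBlocks G₁ 0 0 G₂` restricts on each part to a vector in the row
space of `G₁` resp. `G₂`, so a leak `u + e_(inl i)` would restrict to a leak `u ∘ inl + e_i` of
`G₁` against `A₁`. Reindexing the rows by `Fin (l₁ + l₂) ≃ Fin l₁ ⊕ Fin l₂` changes neither the
decodability nor the row space.
-/

section

variable {F}
omit [Fintype F]

theorem mem_rowSpace_iff_exists_vecMul {ρ ι : Type*} [Fintype ρ] {G : Matrix ρ ι F} {v : ι → F} :
    v ∈ rowSpace F G ↔ ∃ y, y ᵥ* G = v := by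
  change v ∈ Submodule.span F (Set.range G.row) ↔ _
  rw [← range_vecMulLinear]
  rfl

theorem rowSpace_submatrix_equiv {ρ ρ' ι : Type*} (G : Matrix ρ ι F) (e : ρ' ≃ ρ) :
    rowSpace F (G.submatrix e id) = rowSpace F G :=
  congrArg (Submodule.span F) (e.surjective.range_comp G)

variable {ρ₁ ρ₂ ι₁ ι₂ : Type*}

theorem mem_rowSpace_fromBlocks_iff [Fintype ρ₁] [Fintype ρ₂]
    {G₁ : Matrix ρ₁ ι₁ F} {G₂ : Matrix ρ₂ ι₂ F} {v : ι₁ ⊕ ι₂ → F} :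
    v ∈ rowSpace F (fromBlocks G₁ 0 0 G₂) ↔
      v ∘ inl ∈ rowSpace F G₁ ∧ v ∘ inr ∈ rowSpace F G₂ := by
  simp only [mem_rowSpace_iff_exists_vecMul, vecMul_fromBlocks, vecMul_zero, add_zero, zero_add]
  constructor
  · rintro ⟨y, rfl⟩
    exact ⟨⟨_, rfl⟩, ⟨_, rfl⟩⟩
  · rintro ⟨⟨y₁, hy₁⟩, ⟨y₂, hy₂⟩⟩
    refine ⟨Sum.elim y₁ y₂, ?_⟩
    rw [← Sum.elim_comp_inl_inr v, ← hy₁, ← hy₂]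
    rfl

theorem ValidCode.submatrix_equiv {ρ ρ' ι : Type*} [Fintype ι] {K : ι → Set ι}
    {G : Matrix ρ ι F} (hG : ValidCode F K G) (e : ρ' ≃ ρ) :
    ValidCode F K (G.submatrix e id) := by
  intro i
  obtain ⟨D, hD⟩ := hG i
  refine ⟨fun c s => D (c ∘ e.symm) s, fun x => ?_⟩
  convert hD x using 2
  ext r
  simp [mulVec]

theorem weaklySecure_submatrix_equiv {ρ ρ' ι : Type*} [DecidableEq ι] {G : Matrix ρ ι F}
    (e : ρ' ≃ ρ) {A : Set ι} : WeaklySecure F (G.submatrix e id) A ↔ WeaklySecure F G A := by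
  simp only [WeaklySecure, rowSpace_submatrix_equiv]

theorem ValidCode.fromBlocks [Fintype ι₁] [Fintype ι₂] {K : ι₁ ⊕ ι₂ → Set (ι₁ ⊕ ι₂)}
    {G₁ : Matrix ρ₁ ι₁ F} {G₂ : Matrix ρ₂ ι₂ F}
    (hG₁ : ValidCode F (fun i => inl ⁻¹' K (inl i)) G₁)
    (hG₂ : ValidCode F (fun i => inr ⁻¹' K (inr i)) G₂) :
    ValidCode F K (Matrix.fromBlocks G₁ 0 0 G₂) := by
  rintro (i | i)
  · obtain ⟨D, hD⟩ := hG₁ i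
    exact ⟨fun c s => D (c ∘ inl) (fun j => s ⟨inl j, j.2⟩),
      fun x => by simpa [fromBlocks_mulVec] using hD (x ∘ inl)⟩
  · obtain ⟨D, hD⟩ := hG₂ i
    exact ⟨fun c s => D (c ∘ inr) (fun j => s ⟨inr j, j.2⟩),
      fun x => by simpa [fromBlocks_mulVec] using hD (x ∘ inr)⟩

theorem WeaklySecure.add_single_notMem_of_comp {ρ ρ' ι ι' : Type*} [DecidableEq ι]
    [DecidableEq ι'] {G : Matrix ρ ι F} {G' : Matrix ρ' ι' F} {A : Set ι} {A' : Set ι'}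
    (hG' : WeaklySecure F G' A') {f : ι' → ι} (hf : Function.Injective f)
    (hrow : ∀ v ∈ rowSpace F G, v ∘ f ∈ rowSpace F G') (hA : f ⁻¹' A ⊆ A')
    {i : ι'} (hi : i ∉ A') {u : ι → F} (hu : ∀ j, u j ≠ 0 → j ∈ A) :
    u + Pi.single (f i) 1 ∉ rowSpace F G := by
  intro hmem
  have hcomp : (u + Pi.single (f i) 1) ∘ f = u ∘ f + Pi.single i 1 := by
    ext j
    simp [Pi.single_apply, hf.eq_iff]
  exact hG' i hi (u ∘ f) (fun j hj => hA (hu _ hj)) (hcomp ▸ hrow _ hmem)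

theorem WeaklySecure.fromBlocks [Fintype ρ₁] [Fintype ρ₂] [DecidableEq ι₁] [DecidableEq ι₂]
    {G₁ : Matrix ρ₁ ι₁ F} {G₂ : Matrix ρ₂ ι₂ F} {A₁ : Set ι₁} {A₂ : Set ι₂}
    (hG₁ : WeaklySecure F G₁ A₁) (hG₂ : WeaklySecure F G₂ A₂) :
    WeaklySecure F (Matrix.fromBlocks G₁ 0 0 G₂) (inl '' A₁ ∪ inr '' A₂) := by
  rintro (i | i) hi u hu
  · exact hG₁.add_single_notMem_of_comp inl_injective
      (fun v hv => (mem_rowSpace_fromBlocks_iff.1 hv).1)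
      (by simp [Set.preimage_image_eq _ inl_injective]) (by simpa using hi) hu
  · exact hG₂.add_single_notMem_of_comp inr_injective
      (fun v hv => (mem_rowSpace_fromBlocks_iff.1 hv).2)
      (by simp [Set.preimage_image_eq _ inr_injective]) (by simpa using hi) hu

end

theorem blockDiag_validCode_and_weaklySecure {m1 m2 l1 l2 : ℕ}
    (K : (Fin m1 ⊕ Fin m2) → Set (Fin m1 ⊕ Fin m2))
    (A1 : Set (Fin m1)) (A2 : Set (Fin m2))
    (G1 : Matrix (Fin l1) (Fin m1) F) (G2 : Matrix (Fin l2) (Fin m2) F)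
    (hG1v : ValidCode F (fun i => {j | Sum.inl j ∈ K (Sum.inl i)}) G1)
    (hG1s : WeaklySecure F G1 A1)
    (hG2v : ValidCode F (fun i => {j | Sum.inr j ∈ K (Sum.inr i)}) G2)
    (hG2s : WeaklySecure F G2 A2) :
    ValidCode F K (Matrix.fromBlocks G1 0 0 G2) ∧
    WeaklySecure F (Matrix.fromBlocks G1 0 0 G2) (Sum.inl '' A1 ∪ Sum.inr '' A2) ∧
    ∃ G : Matrix (Fin (l1 + l2)) (Fin m1 ⊕ Fin m2) F,
      ValidCode F K G ∧ WeaklySecure F G (Sum.inl '' A1 ∪ Sum.inr '' A2) := by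
  have hvalid := ValidCode.fromBlocks hG1v hG2v
  have hsecure := WeaklySecure.fromBlocks hG1s hG2s
  exact ⟨hvalid, hsecure, _, hvalid.submatrix_equiv finSumFinEquiv.symm,
    (weaklySecure_submatrix_equiv _).2 hsecure⟩
end
end

section
/- Let F be a field and partition the columns [m] into P_1, P_2, P_{12} of sizes m_1, m_2, m_{12}. Let G_1 ∈ F^{l_1×m_1}, G_2 ∈ F^{l_2×m_2}, G_{12} ∈ F^{l_{12}×m_{12}} with l_{12} ≥ l_1 + l_2, and let A = A_1 ∪ A_2 ∪ A_{12} with A_T ⊆ P_T. Form the l_{12} × m matrix G whose rows 1,…,l_1 equal (G_1 | 0 | first l_1 rows of G_{12}), whose rows l_1+1,…,l_1+l_2 equal (0 | G_2 | rows l_1+1,…,l_1+l_2 of G_{12}), and whose remaining rows equal (0 | 0 | remaining rows of G_{12}), the column blocks being P_1, P_2, P_{12}. If G_1 is weakly secure against A_1 (on columns P_1), G_2 is weakly secure against A_2 (on columns P_2), and G_{12} is weakly secure against A_{12} (on columns P_{12}), then G is weakly secure against A. -/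
open Matrix Sum

noncomputable section

variable (F : Type*) [Field F]

/-!
Restricting the columns to a block `P_T` maps the row space of `G` into that of `G_T`, since
every row of `G` restricted to `P_T` is a row of `G_T` or zero. Hence a vector `u + e_i` with
`i ∈ P_T` in the row space of `G` would restrict to one violating the weak security of `G_T`.
-/

section

variable {F} {ρ σ ι κ : Type*}

lemma row_mem_rowSpace (G : Matrix ρ ι F) (r : ρ) : G r ∈ rowSpace F G :=
  Submodule.subset_span ⟨r, rfl⟩

lemma comp_mem_rowSpace {G : Matrix ρ ι F} {H : Matrix σ κ F} {f : κ → ι}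
    (hrows : ∀ r, G r ∘ f ∈ rowSpace F H) {x : ι → F} (hx : x ∈ rowSpace F G) :
    x ∘ f ∈ rowSpace F H := by
  have hle : (rowSpace F G).map (LinearMap.funLeft F F f) ≤ rowSpace F H := by
    rw [rowSpace, Submodule.map_span_le]
    rintro _ ⟨r, rfl⟩
    exact hrows r
  exact hle ⟨x, hx, rfl⟩

lemma WeaklySecure.add_single_comp_notMem_rowSpace [DecidableEq ι] [DecidableEq κ]
    {G : Matrix ρ ι F} {H : Matrix σ κ F} {A : Set κ} (hH : WeaklySecure F H A)
    {f : κ → ι} (hf : Function.Injective f) (hrows : ∀ r, G r ∘ f ∈ rowSpace F H)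
    {B : Set ι} (hB : f ⁻¹' B ⊆ A) {k : κ} (hk : k ∉ A) {u : ι → F}
    (hu : ∀ j, u j ≠ 0 → j ∈ B) :
    u + Pi.single (f k) 1 ∉ rowSpace F G := by
  intro hmem
  have hsingle : Pi.single (f k) (1 : F) ∘ f = Pi.single k 1 := by
    ext j
    simp [Pi.single_apply, hf.eq_iff]
  refine hH k hk (u ∘ f) (fun j hj => hB (hu (f j) hj)) ?_
  rw [← hsingle]
  exact comp_mem_rowSpace hrows hmem

end

/-- With `l12 ≥ l1 + l2`, form the `l12 × m` matrix `G` whose rows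
`1, …, l1` equal `(G1 | 0 | first l1 rows of G12)`, whose rows `l1+1, …, l1+l2` equal
`(0 | G2 | rows l1+1, …, l1+l2 of G12)`, and whose remaining rows equal
`(0 | 0 | remaining rows of G12)`, on the column blocks `P1 ≃ Fin m1`, `P2 ≃ Fin m2`,
`P12 ≃ Fin m12`.  If `G1, G2, G12` are weakly secure against `A1, A2, A12`, then `G` is
weakly secure against `A = A1 ∪ A2 ∪ A12`. -/
theorem stacked_weaklySecure {m1 m2 m12 l1 l2 l12 : ℕ}
    (G1 : Matrix (Fin l1) (Fin m1) F) (G2 : Matrix (Fin l2) (Fin m2) F)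
    (G12 : Matrix (Fin l12) (Fin m12) F)
    (A1 : Set (Fin m1)) (A2 : Set (Fin m2)) (A12 : Set (Fin m12))
    (hs1 : WeaklySecure F G1 A1) (hs2 : WeaklySecure F G2 A2)
    (hs12 : WeaklySecure F G12 A12) :
    WeaklySecure F
      (Matrix.of fun (r : Fin l12) (j : Fin m1 ⊕ Fin m2 ⊕ Fin m12) =>
        Sum.elim
          (fun j1 => if h : (r : ℕ) < l1 then G1 ⟨(r : ℕ), h⟩ j1 else 0)
          (Sum.elim
            (fun j2 => if h : (r : ℕ) < l1 + l2 ∧ l1 ≤ (r : ℕ) then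
                G2 ⟨(r : ℕ) - l1, by omega⟩ j2 else 0)
            (fun j12 => G12 r j12)) j)
      {j | Sum.elim (· ∈ A1) (Sum.elim (· ∈ A2) (· ∈ A12)) j} := by
  intro i hi u hu
  rcases i with i1 | i2 | i12
  · refine hs1.add_single_comp_notMem_rowSpace inl_injective (fun r => ?_) subset_rfl hi hu
    by_cases h : (r : ℕ) < l1
    · simpa [Function.comp_def, h] using row_mem_rowSpace G1 ⟨r, h⟩
    · simp only [Function.comp_def, of_apply, elim_inl, h, dite_false]
      exact zero_mem _
  · refine hs2.add_single_comp_notMem_rowSpace (inr_injective.comp inl_injective)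
      (fun r => ?_) subset_rfl hi hu
    by_cases h : (r : ℕ) < l1 + l2 ∧ l1 ≤ (r : ℕ)
    · simpa [Function.comp_def, h] using row_mem_rowSpace G2 ⟨r - l1, by omega⟩
    · simp only [Function.comp_def, of_apply, elim_inl, elim_inr, h, dite_false]
      exact zero_mem _
  · exact hs12.add_single_comp_notMem_rowSpace (inr_injective.comp inr_injective)
      (row_mem_rowSpace G12) subset_rfl hi hu
end
end

section
/- Let F be a finite field, and consider a single-sender index coding instance on [m] with side-information sets K_i ⊆ [m]\{i}. A matrix G ∈ F^{l×m} is a valid index code — i.e., for every i ∈ [m] there exists a decoding function D_i : F^l × F^{K_i} → F with D_i(Gx, x|_{K_i}) = x_i for all x ∈ F^m — if and only if for every i ∈ [m] there exists a vector u_i ∈ F^m with support contained in K_i such that u_i + e_i lies in the row space of G. -/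
open Matrix

noncomputable section

variable (F : Type*) [Field F] [Fintype F]

/-! Receiver `i` can decode iff, by linearity, `x i = 0` whenever `G *ᵥ x = 0` and `x`
vanishes on `K i`. By duality (a subspace of `F^m` is its own double annihilator) this says
that `e_i` lies in the row space of `G` plus the vectors supported in `K i`; the negated
second summand is the required `u_i`. -/

theorem exists_factorization₂_iff {α β γ δ : Type*} [Nonempty δ] (f : α → β) (h : α → γ)
    (g : α → δ) :
    (∃ D : β → γ → δ, ∀ x, D (f x) (h x) = g x) ↔
      ∀ x y, f x = f y → h x = h y → g x = g y := by
  refine ⟨fun ⟨D, hD⟩ x y hf hh => by rw [← hD x, ← hD y, hf, hh], fun hg => ?_⟩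
  have hfactor : g.FactorsThrough fun x => (f x, h x) := fun x y hxy =>
    hg x y (congrArg Prod.fst hxy) (congrArg Prod.snd hxy)
  exact ⟨fun b c => Function.extend (fun x => (f x, h x)) g (fun _ => Classical.arbitrary δ)
    (b, c), hfactor.extend_apply _⟩

theorem exists_decoder_iff_forall_mulVec_eq_zero {k ι ρ : Type*} [Ring k] [Fintype ι]
    (G : Matrix ρ ι k) (S : Set ι) (i : ι) :
    (∃ D : (ρ → k) → (S → k) → k, ∀ x : ι → k, D (G *ᵥ x) (fun j => x j.1) = x i) ↔
      ∀ x : ι → k, G *ᵥ x = 0 → (∀ j ∈ S, x j = 0) → x i = 0 := by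
  rw [exists_factorization₂_iff]
  constructor
  · intro hdet x hGx hxS
    exact hdet x 0 (by rw [hGx, mulVec_zero]) (funext fun j => hxS j j.2)
  · intro hker x y hG hS
    have hsub := hker (x - y) (by rw [mulVec_sub, hG, sub_self]) fun j hj => by
      rw [Pi.sub_apply, congrFun hS ⟨j, hj⟩, sub_self]
    exact sub_eq_zero.1 hsub

theorem mem_pi_compl_bot_iff {R ι : Type*} [Semiring R] {S : Set ι} {u : ι → R} :
    u ∈ Submodule.pi Sᶜ (fun _ => (⊥ : Submodule R R)) ↔ ∀ j, u j ≠ 0 → j ∈ S := by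
  simp [Submodule.mem_pi, not_imp_comm]

section DotProduct

variable {k ι : Type*} [Field k] [Fintype ι]

theorem mem_iff_forall_le_ker_dotProduct (W : Submodule k (ι → k)) (v : ι → k) :
    v ∈ W ↔ ∀ x : ι → k, W ≤ LinearMap.ker (dotProductBilin k k x) → x ⬝ᵥ v = 0 := by
  classical
  rw [← Subspace.forall_mem_dualAnnihilator_apply_eq_zero_iff,
    (dotProductEquiv k ι).surjective.forall]
  simp only [Submodule.mem_dualAnnihilator, dotProductEquiv_apply_apply, SetLike.le_def,
    LinearMap.mem_ker, dotProductBilin_apply_apply]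

theorem rowSpace_le_ker_dotProduct_iff {ρ : Type*} (G : Matrix ρ ι k) (x : ι → k) :
    rowSpace k G ≤ LinearMap.ker (dotProductBilin k k x) ↔ G *ᵥ x = 0 := by
  simp only [rowSpace, Submodule.span_le, Set.range_subset_iff, SetLike.mem_coe,
    LinearMap.mem_ker, dotProductBilin_apply_apply, funext_iff, mulVec, dotProduct_comm x,
    Pi.zero_apply]

theorem pi_compl_bot_le_ker_dotProduct_iff (S : Set ι) (x : ι → k) :
    Submodule.pi Sᶜ (fun _ => ⊥) ≤ LinearMap.ker (dotProductBilin k k x) ↔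
      ∀ j ∈ S, x j = 0 := by
  classical
  constructor
  · intro h j hj
    have hsingle : Pi.single j (1 : k) ∈ Submodule.pi Sᶜ (fun _ => ⊥) :=
      mem_pi_compl_bot_iff.2 fun l hl => by
        rcases eq_or_ne l j with rfl | hlj
        · exact hj
        · simp [Pi.single_eq_of_ne hlj] at hl
    simpa using h hsingle
  · intro hx w hw
    simp only [LinearMap.mem_ker, dotProductBilin_apply_apply]
    refine Finset.sum_eq_zero fun j _ => ?_
    by_cases hj : j ∈ S
    · rw [hx j hj, zero_mul]
    · rw [(Submodule.mem_pi.1 hw j hj : w j ∈ ⊥), mul_zero]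

end DotProduct

theorem Submodule.mem_sup_iff_exists_add_mem {R M : Type*} [Ring R] [AddCommGroup M]
    [Module R M] {A B : Submodule R M} {v : M} : v ∈ A ⊔ B ↔ ∃ u ∈ B, u + v ∈ A := by
  rw [Submodule.mem_sup]
  constructor
  · rintro ⟨a, ha, b, hb, rfl⟩
    exact ⟨-b, B.neg_mem hb, by simpa using ha⟩
  · rintro ⟨u, hu, huv⟩
    exact ⟨u + v, huv, -u, B.neg_mem hu, by abel⟩

theorem validCode_iff_exists_support_add_single_mem_rowSpace {l m : ℕ}
    (K : Fin m → Set (Fin m))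
    (G : Matrix (Fin l) (Fin m) F) :
    ValidCode F K G ↔
      ∀ i : Fin m, ∃ u : Fin m → F, (∀ j, u j ≠ 0 → j ∈ K i) ∧
        u + Pi.single i (1 : F) ∈ rowSpace F G := by
  refine forall_congr' fun i => ?_
  have hdual : Pi.single i 1 ∈ rowSpace F G ⊔ Submodule.pi (K i)ᶜ (fun _ => ⊥) ↔
      ∀ x : Fin m → F, G *ᵥ x = 0 → (∀ j ∈ K i, x j = 0) → x i = 0 := by
    simp only [mem_iff_forall_le_ker_dotProduct, sup_le_iff, rowSpace_le_ker_dotProduct_iff,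
      pi_compl_bot_le_ker_dotProduct_iff, dotProduct_single, mul_one, and_imp]
  rw [exists_decoder_iff_forall_mulVec_eq_zero, ← hdual, Submodule.mem_sup_iff_exists_add_mem]
  simp only [mem_pi_compl_bot_iff]
end
end

section
/- Let F be a field and partition [m] into S_1 = {1,…,m_1} and S_2 = {m_1+1,…,m}. Let G be an l×m matrix that is block diagonal with respect to this partition: G = diag(G_1, G_2) with G_1 ∈ F^{l_1×m_1}, G_2 ∈ F^{l_2×m_2}, l = l_1 + l_2. Let A = A_1 ∪ A_2 with A_1 ⊆ S_1 and A_2 ⊆ S_2, each A_j a proper subset of S_j. Then G is weakly secure against A if and only if G_1 is weakly secure against A_1 (as a code on S_1) and G_2 is weakly secure against A_2 (as a code on S_2). -/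
open Matrix Sum

noncomputable section

variable (F : Type*) [Field F]

/-!
Since `u + e i = (u + e i) - u`, weak security against `A` says exactly that no `e i` with
`i ∉ A` lies in `rowSpace G ⊔ F^A`, where `F^A` is the space of vectors supported in `A`.
For `diag(G₁, G₂)` and `A₁ ∪ A₂`, splitting coordinates along `S₁ ⊕ S₂` turns this sum into
`(rowSpace G₁ ⊔ F^A₁) × (rowSpace G₂ ⊔ F^A₂)` and sends `e (inl i)` to `(e i, 0)` and
`e (inr i)` to `(0, e i)`.
-/

def supportedIn {ι : Type*} (A : Set ι) : Submodule F (ι → F) :=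
  Submodule.pi Aᶜ fun _ => ⊥

theorem mem_supportedIn {ι : Type*} {A : Set ι} {u : ι → F} :
    u ∈ supportedIn F A ↔ ∀ j, u j ≠ 0 → j ∈ A := by
  simp [supportedIn, not_imp_comm]

theorem weaklySecure_iff_single_notMem_sup {ρ ι : Type*} [DecidableEq ι] (G : Matrix ρ ι F)
    (A : Set ι) :
    WeaklySecure F G A ↔ ∀ i ∉ A, Pi.single i 1 ∉ rowSpace F G ⊔ supportedIn F A := by
  simp only [WeaklySecure, Submodule.mem_sup, ← mem_supportedIn, not_exists, not_and]
  refine forall₂_congr fun i _ => ⟨fun h v hv u hu huv => h (-u) (neg_mem hu) ?_,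
    fun h u hu hmem => h _ hmem (-u) (neg_mem hu) (by abel)⟩
  rwa [← huv, add_comm v, neg_add_cancel_left]

section BlockDiagonal

variable {ρ₁ ρ₂ ι₁ ι₂ : Type*}

theorem map_rowSpace_fromBlocks (G₁ : Matrix ρ₁ ι₁ F) (G₂ : Matrix ρ₂ ι₂ F) :
    (rowSpace F (fromBlocks G₁ 0 0 G₂)).map
        (LinearEquiv.sumArrowLequivProdArrow ι₁ ι₂ F F).toLinearMap =
      (rowSpace F G₁).prod (rowSpace F G₂) := by
  simp only [rowSpace, Submodule.map_span, ← LinearMap.span_inl_union_inr]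
  congr 1
  ext p
  simp only [← Set.range_comp, Set.mem_range, Sum.exists, Set.mem_union]
  rfl

theorem map_supportedIn_sum (A₁ : Set ι₁) (A₂ : Set ι₂) :
    (supportedIn F (inl '' A₁ ∪ inr '' A₂)).map
        (LinearEquiv.sumArrowLequivProdArrow ι₁ ι₂ F F).toLinearMap =
      (supportedIn F A₁).prod (supportedIn F A₂) := by
  ext ⟨v, w⟩
  simp [Submodule.mem_map_equiv, mem_supportedIn, Sum.forall]

theorem map_rowSpace_sup_supportedIn_fromBlocks (G₁ : Matrix ρ₁ ι₁ F) (G₂ : Matrix ρ₂ ι₂ F)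
    (A₁ : Set ι₁) (A₂ : Set ι₂) :
    (rowSpace F (fromBlocks G₁ 0 0 G₂) ⊔ supportedIn F (inl '' A₁ ∪ inr '' A₂)).map
        (LinearEquiv.sumArrowLequivProdArrow ι₁ ι₂ F F).toLinearMap =
      (rowSpace F G₁ ⊔ supportedIn F A₁).prod (rowSpace F G₂ ⊔ supportedIn F A₂) := by
  rw [Submodule.map_sup, map_rowSpace_fromBlocks, map_supportedIn_sum, Submodule.prod_sup_prod]

variable [DecidableEq ι₁] [DecidableEq ι₂] {P : Submodule F (ι₁ ⊕ ι₂ → F)}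
  {P₁ : Submodule F (ι₁ → F)} {P₂ : Submodule F (ι₂ → F)}

theorem single_inl_mem_iff_of_map_eq_prod
    (h : P.map (LinearEquiv.sumArrowLequivProdArrow ι₁ ι₂ F F).toLinearMap = P₁.prod P₂)
    (i : ι₁) (x : F) : Pi.single (inl i) x ∈ P ↔ Pi.single i x ∈ P₁ := by
  have : Pi.single (inl i) x =
      (LinearEquiv.sumArrowLequivProdArrow ι₁ ι₂ F F).symm (Pi.single i x, 0) := by
    ext (j | j) <;> simp [Pi.single_apply]
  rw [this, ← Submodule.mem_map_equiv, h]
  simp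

theorem single_inr_mem_iff_of_map_eq_prod
    (h : P.map (LinearEquiv.sumArrowLequivProdArrow ι₁ ι₂ F F).toLinearMap = P₁.prod P₂)
    (i : ι₂) (x : F) : Pi.single (inr i) x ∈ P ↔ Pi.single i x ∈ P₂ := by
  have : Pi.single (inr i) x =
      (LinearEquiv.sumArrowLequivProdArrow ι₁ ι₂ F F).symm (0, Pi.single i x) := by
    ext (j | j) <;> simp [Pi.single_apply]
  rw [this, ← Submodule.mem_map_equiv, h]
  simp

end BlockDiagonal

theorem blockDiag_weaklySecure_iff {m1 m2 l1 l2 : ℕ}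
    (G1 : Matrix (Fin l1) (Fin m1) F) (G2 : Matrix (Fin l2) (Fin m2) F)
    (A1 : Set (Fin m1)) (A2 : Set (Fin m2)) :
    WeaklySecure F (Matrix.fromBlocks G1 0 0 G2)
        (Sum.inl '' A1 ∪ Sum.inr '' A2) ↔
      WeaklySecure F G1 A1 ∧ WeaklySecure F G2 A2 := by
  have h := map_rowSpace_sup_supportedIn_fromBlocks F G1 G2 A1 A2
  simp only [weaklySecure_iff_single_notMem_sup, Sum.forall,
    single_inl_mem_iff_of_map_eq_prod F h, single_inr_mem_iff_of_map_eq_prod F h]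
  simp
end
end

section
/- Let F be a field and let G ∈ F^{l×m} be a matrix of two-sender form on the column blocks (P_1, P_2, P_{12}): its sender-1 rows are (G_1 | 0 | G_{12}^1) and its sender-2 rows are (0 | G_2 | G_{12}^2), where G_1 ∈ F^{l_1×|P_1|} and G_2 ∈ F^{l_2×|P_2|}. Let A = A_1 ∪ A_2 ∪ P_{12} with A_1 ⊊ P_1 and A_2 ⊊ P_2 (so the eavesdropper knows all of P_{12}). If G is weakly secure against A, then G_1 is weakly secure against A_1 (as a code on P_1) and G_2 is weakly secure against A_2 (as a code on P_2). -/
/-!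
A row combination of `G₁` witnessing that `G₁` leaks a symbol outside `A₁` is also a combination
of the sender-1 rows of `G`. As such it vanishes on `P₂` and is unconstrained only on `P₁₂`, which
the eavesdropper knows, so it witnesses that `G` leaks the same symbol outside `A`.
-/

open Matrix Sum

noncomputable section

variable (F : Type*) [Field F]

section Submatrix

variable {F} {ρ σ ι κ : Type*}

theorem exists_mem_rowSpace_submatrix_eq {G : Matrix ρ ι F} (f : σ → ρ) (e : κ → ι) {v : κ → F}
    (hv : v ∈ rowSpace F (G.submatrix f e)) :
    ∃ w ∈ rowSpace F G, w ∘ e = v ∧ ∀ j, (∀ r, G (f r) j = 0) → w j = 0 := by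
  induction hv using Submodule.span_induction with
  | mem _ hx =>
    obtain ⟨r, rfl⟩ := hx
    exact ⟨G (f r), Submodule.subset_span ⟨f r, rfl⟩, rfl, fun j hj => hj r⟩
  | zero => exact ⟨0, zero_mem _, rfl, fun _ _ => rfl⟩
  | add _ _ _ _ hx hy =>
    obtain ⟨w, hw, rfl, hw0⟩ := hx
    obtain ⟨w', hw', rfl, hw0'⟩ := hy
    refine ⟨w + w', add_mem hw hw', rfl, fun j hj => ?_⟩
    simp [hw0 j hj, hw0' j hj]
  | smul a _ _ hx =>
    obtain ⟨w, hw, rfl, hw0⟩ := hx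
    exact ⟨a • w, Submodule.smul_mem _ a hw, rfl, fun j hj => by simp [hw0 j hj]⟩

variable [DecidableEq ι] [DecidableEq κ]

theorem WeaklySecure.submatrix {G : Matrix ρ ι F} {A : Set ι} (hG : WeaklySecure F G A)
    (f : σ → ρ) (e : κ ↪ ι) (hzero : ∀ j ∉ Set.range e, j ∉ A → ∀ r, G (f r) j = 0) :
    WeaklySecure F (G.submatrix f e) (e ⁻¹' A) := by
  intro i hi u hu hmem
  obtain ⟨w, hw, hwe, hw0⟩ := exists_mem_rowSpace_submatrix_eq f e hmem
  -- `w - e_{e i}` agrees with `u` on the columns of `e` and with `w` off them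
  refine hG (e i) hi (w - Pi.single (e i) 1) (fun j hj => ?_) (by simpa using hw)
  by_cases hje : j ∈ Set.range e
  · obtain ⟨k, rfl⟩ := hje
    have hwk : w (e k) = u k + Pi.single (M := fun _ => F) i 1 k := congrFun hwe k
    simp only [Pi.sub_apply, hwk, Pi.single_apply, e.injective.eq_iff] at hj
    exact hu k (by simpa using hj)
  · by_contra hjA
    have hj_ne : j ≠ e i := fun h => hje ⟨i, h.symm⟩
    simp [hw0 j (hzero j hje hjA), hj_ne] at hj

end Submatrix

theorem components_weaklySecure_of_weaklySecure {m1 m2 m12 l1 l2 : ℕ}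
    (G : Matrix (Fin l1 ⊕ Fin l2) (Fin m1 ⊕ Fin m2 ⊕ Fin m12) F)
    (G1 : Matrix (Fin l1) (Fin m1) F) (G2 : Matrix (Fin l2) (Fin m2) F)
    (h11 : ∀ r j, G (Sum.inl r) (Sum.inl j) = G1 r j)
    (h12 : ∀ r j, G (Sum.inl r) (Sum.inr (Sum.inl j)) = 0)
    (h21 : ∀ r j, G (Sum.inr r) (Sum.inl j) = 0)
    (h22 : ∀ r j, G (Sum.inr r) (Sum.inr (Sum.inl j)) = G2 r j)
    (A1 : Set (Fin m1)) (A2 : Set (Fin m2))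
    (hsec : WeaklySecure F G
      {j | Sum.elim (· ∈ A1) (Sum.elim (· ∈ A2) (fun _ => True)) j}) :
    WeaklySecure F G1 A1 ∧ WeaklySecure F G2 A2 := by
  have hG1 : G.submatrix Sum.inl Sum.inl = G1 := Matrix.ext h11
  have hG2 : G.submatrix Sum.inr (Sum.inr ∘ Sum.inl) = G2 := Matrix.ext h22
  constructor
  · rw [← hG1]
    refine hsec.submatrix Sum.inl Function.Embedding.inl ?_
    rintro (j | j | j) hj hjA r
    · exact absurd ⟨j, rfl⟩ hj
    · exact h12 r j
    · exact absurd trivial hjA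
  · rw [← hG2]
    refine hsec.submatrix Sum.inr ⟨Sum.inr ∘ Sum.inl, Sum.inr_injective.comp Sum.inl_injective⟩ ?_
    rintro (j | j | j) hj hjA r
    · exact h21 r j
    · exact absurd ⟨j, rfl⟩ hj
    · exact absurd trivial hjA
end
end
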